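/- arXiv:2010.06345 — 2 statements merged into one kernel-verified Lean document; each statement's English description precedes it below -/
import Mathlib

section
/- Let {e_k} be a frame over X with frame operator S and bounds B1, B2, and set R := I − (2/(B1+B2))S. Then ‖R‖ ≤ (B2−B1)/(B2+B1) < 1, and the dual frame elements satisfy ẽ_k = (2/(B1+B2)) Σ_{j=0}^∞ R^j e_k, with the series converging in norm. -/
/-!
The frame bounds say `B1 ≤ S ≤ B2` in the sense of quadratic forms, so the quadratic form of the
self-adjoint operator `R = 1 - c • S`, `c = 2 / (B1 + B2)`, lies between `∓ M ‖x‖²` with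
`M = (B2 - B1) / (B2 + B1)`; since the norm of a self-adjoint operator is the supremum of its
Rayleigh quotient, `‖R‖ ≤ M < 1`. Hence `c • S = 1 - R` is inverted by the Neumann series
`∑ R ^ j`, and `T = S⁻¹ = c • ∑ R ^ j`.
-/

open scoped ComplexInnerProductSpace

section FrameOperator

variable {𝕜 E ι : Type*} [RCLike 𝕜] [NormedAddCommGroup E] [InnerProductSpace 𝕜 E]

def IsFrameOperator (e : ι → E) (S : E →L[𝕜] E) : Prop :=
  ∀ x, HasSum (fun k => inner 𝕜 (e k) x • e k) (S x)

namespace IsFrameOperator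

variable {e : ι → E} {S : E →L[𝕜] E}

theorem hasSum_inner_mul_inner_left (hS : IsFrameOperator e S) (x y : E) :
    HasSum (fun k => inner 𝕜 x (e k) * inner 𝕜 (e k) y) (inner 𝕜 (S x) y) := by
  simpa [inner_smul_left] using (innerSLFlip 𝕜 y).hasSum (hS x)

theorem hasSum_inner_mul_inner_right (hS : IsFrameOperator e S) (x y : E) :
    HasSum (fun k => inner 𝕜 x (e k) * inner 𝕜 (e k) y) (inner 𝕜 x (S y)) := by
  simpa [inner_smul_right, mul_comm] using (innerSL 𝕜 x).hasSum (hS y)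

theorem isSymmetric (hS : IsFrameOperator e S) : (S : E →ₗ[𝕜] E).IsSymmetric := fun x y =>
  (hS.hasSum_inner_mul_inner_left x y).unique (hS.hasSum_inner_mul_inner_right x y)

theorem hasSum_norm_inner_sq (hS : IsFrameOperator e S) (x : E) :
    HasSum (fun k => ‖inner 𝕜 (e k) x‖ ^ 2) (RCLike.re (inner 𝕜 (S x) x)) := by
  have hterm (k : ι) :
      RCLike.re (inner 𝕜 x (e k) * inner 𝕜 (e k) x) = ‖inner 𝕜 (e k) x‖ ^ 2 := by
    rw [← inner_conj_symm x (e k), RCLike.conj_mul, ← RCLike.ofReal_pow, RCLike.ofReal_re]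
  simpa only [RCLike.reCLM_apply, hterm] using
    RCLike.reCLM.hasSum (hS.hasSum_inner_mul_inner_left x x)

end IsFrameOperator

end FrameOperator

theorem ContinuousLinearMap.norm_le_of_abs_re_inner_le
    {𝕜 E : Type*} [RCLike 𝕜] [NormedAddCommGroup E] [InnerProductSpace 𝕜 E]
    {T : E →L[𝕜] E} (hT : T.IsSymmetric) {M : ℝ} (hM : 0 ≤ M)
    (h : ∀ x, |RCLike.re (inner 𝕜 (T x) x)| ≤ M * ‖x‖ ^ 2) : ‖T‖ ≤ M := by
  rw [T.norm_eq_iSup_rayleighQuotient hT]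
  refine ciSup_le fun x => ?_
  rcases eq_or_ne x 0 with rfl | hx
  · simpa using hM
  rw [ContinuousLinearMap.rayleighQuotient, abs_div, abs_sq, div_le_iff₀ (by positivity)]
  exact h x

theorem abs_sub_two_div_mul_le {B1 B2 q n : ℝ} (hB : 0 < B1 + B2)
    (hlow : B1 * n ≤ q) (hupp : q ≤ B2 * n) :
    |n - 2 / (B1 + B2) * q| ≤ (B2 - B1) / (B2 + B1) * n := by
  have hsub : n - 2 / (B1 + B2) * q = ((B1 + B2) * n - 2 * q) / (B1 + B2) := by
    field_simp
  rw [hsub, abs_le, add_comm B2 B1, div_mul_eq_mul_div, ← neg_div,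
    div_le_div_iff_of_pos_right hB, div_le_div_iff_of_pos_right hB]
  constructor <;> linarith

theorem hasSum_smul_pow_one_sub_smul_of_mul_eq_one
    {𝕜 A : Type*} [NormedField 𝕜] [NormedRing A] [NormedAlgebra 𝕜 A] [CompleteSpace A]
    {c : 𝕜} {S T : A} (hR : ‖1 - c • S‖ < 1) (hTS : T * S = 1) :
    HasSum (fun j => c • (1 - c • S) ^ j) T := by
  have hinv : c • S * ∑' j, (1 - c • S) ^ j = 1 := by
    simpa only [sub_sub_cancel] using mul_neg_geom_series _ hR
  have hT : T = c • ∑' j, (1 - c • S) ^ j := by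
    calc T = T * (c • S * ∑' j, (1 - c • S) ^ j) := by rw [hinv, mul_one]
      _ = c • ∑' j, (1 - c • S) ^ j := by
        rw [smul_mul_assoc, mul_smul_comm, ← mul_assoc, hTS, one_mul]
  rw [hT]
  exact (summable_geometric_of_norm_lt_one hR).hasSum.const_smul c

theorem dual_frame_neumann_series_general
    {X : Type*} [NormedAddCommGroup X] [InnerProductSpace ℂ X] [CompleteSpace X]
    (e : ℕ → X) (B1 B2 : ℝ) (hB1 : 0 < B1) (hB12 : B1 ≤ B2)
    (hlow : ∀ x : X, B1 * ‖x‖ ^ 2 ≤ ∑' k, ‖⟪e k, x⟫‖ ^ 2)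
    (hupp : ∀ x : X, ∑' k, ‖⟪e k, x⟫‖ ^ 2 ≤ B2 * ‖x‖ ^ 2)
    (S T : X →L[ℂ] X)
    (hS : ∀ x : X, HasSum (fun k => ⟪e k, x⟫ • e k) (S x))
    (hTS : T ∘L S = 1)
    (R : X →L[ℂ] X)
    (hR : R = 1 - ((2 / (B1 + B2) : ℝ) : ℂ) • S) :
    ‖R‖ ≤ (B2 - B1) / (B2 + B1) ∧ (B2 - B1) / (B2 + B1) < 1 ∧
    ∀ k, HasSum (fun j : ℕ => ((2 / (B1 + B2) : ℝ) : ℂ) • (R ^ j) (e k)) (T (e k)) := by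
  have hframe : IsFrameOperator e S := hS
  have hB : 0 < B1 + B2 := by linarith
  have hRsymm : (R : X →ₗ[ℂ] X).IsSymmetric := by
    rw [hR]
    exact LinearMap.IsSymmetric.one.sub (hframe.isSymmetric.smul (Complex.conj_ofReal _))
  have hRnorm : ‖R‖ ≤ (B2 - B1) / (B2 + B1) := by
    refine R.norm_le_of_abs_re_inner_le hRsymm (div_nonneg (by linarith) (by linarith)) fun x => ?_
    have hre : RCLike.re ⟪R x, x⟫ = ‖x‖ ^ 2 - 2 / (B1 + B2) * RCLike.re ⟪S x, x⟫ := by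
      rw [hR, sub_apply, one_apply_eq_self, smul_apply, inner_sub_left, inner_smul_left,
        Complex.conj_ofReal, map_sub, inner_self_eq_norm_sq_to_K, ← RCLike.ofReal_pow,
        RCLike.ofReal_re]
      exact congrArg _ (Complex.re_ofReal_mul _ _)
    have hquad := (hframe.hasSum_norm_inner_sq x).tsum_eq
    rw [hre]
    exact abs_sub_two_div_mul_le hB (hquad ▸ hlow x) (hquad ▸ hupp x)
  have hlt : (B2 - B1) / (B2 + B1) < 1 := (div_lt_one (by linarith)).2 (by linarith)
  refine ⟨hRnorm, hlt, fun k => ?_⟩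
  have hsum := hasSum_smul_pow_one_sub_smul_of_mul_eq_one (hR ▸ hRnorm.trans_lt hlt)
    (show T * S = 1 from hTS)
  rw [← hR] at hsum
  simpa only [ContinuousLinearMap.apply_apply, smul_apply] using
    (ContinuousLinearMap.apply ℂ X (e k)).hasSum hsum

/-- With `R := I − (2/(B1+B2))S` one has `‖R‖ ≤ (B2−B1)/(B2+B1) < 1`, and the dual
frame elements satisfy `ẽ k = (2/(B1+B2)) ∑_{j=0}^∞ R^j (e k)`, the series converging
in norm. -/
theorem dual_frame_neumann_series
    {X : Type*} [NormedAddCommGroup X] [InnerProductSpace ℂ X] [CompleteSpace X]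
    (e : ℕ → X) (B1 B2 : ℝ) (hB1 : 0 < B1) (hB2 : 0 < B2) (hB12 : B1 ≤ B2)
    (hsum : ∀ x : X, Summable fun k => ‖⟪e k, x⟫‖ ^ 2)
    (hlow : ∀ x : X, B1 * ‖x‖ ^ 2 ≤ ∑' k, ‖⟪e k, x⟫‖ ^ 2)
    (hupp : ∀ x : X, ∑' k, ‖⟪e k, x⟫‖ ^ 2 ≤ B2 * ‖x‖ ^ 2)
    (S T : X →L[ℂ] X)
    (hS : ∀ x : X, HasSum (fun k => ⟪e k, x⟫ • e k) (S x))
    (hST : S ∘L T = 1) (hTS : T ∘L S = 1)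
    (R : X →L[ℂ] X)
    (hR : R = 1 - ((2 / (B1 + B2) : ℝ) : ℂ) • S) :
    ‖R‖ ≤ (B2 - B1) / (B2 + B1) ∧ (B2 - B1) / (B2 + B1) < 1 ∧
    ∀ k, HasSum (fun j : ℕ => ((2 / (B1 + B2) : ℝ) : ℂ) • (R ^ j) (e k)) (T (e k)) :=
  dual_frame_neumann_series_general e B1 B2 hB1 hB12 hlow hupp S T hS hTS R hR
end

section
/- Suppose the frame intertwining assumption holds, {f_k^n} are tight frames and the range condition (3.20) holds. Then 𝒜y is a least-squares solution of Ax = y, and for any least-squares solution x* and every k ∈ ℕ: Σ_m |⟨(𝒜y)_m, e_k^m⟩|² ≤ Σ_m |⟨x*_m, e_k^m⟩|²; moreover ‖x†‖ ≤ ‖𝒜y‖ ≤ √(B2/B1)‖x†‖ where B1, B2 are the frame bounds of {e_k^m}. -/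
/-!
Applying the tight frames `f n` coefficientwise turns `C ‖A w - y‖²` into `∑ₖ ‖Λₖ aₖ(w) - bₖ‖²`,
where `aₖ(w)` and `bₖ` are the vectors of `k`-th frame coefficients of `w` and `y`. The
coefficients of `𝒜y` are `Λₖ† bₖ`, which minimises every summand, so `𝒜y` is a least-squares
solution. For any other least-squares solution all summands must then agree, and among the
minimisers of the `k`-th summand `Λₖ† bₖ` has the least norm: this is the coefficientwise
inequality. Summing it over `k` between the frame bounds gives `B₁ ‖𝒜y‖² ≤ B₂ ‖x†‖²`.
-/

open scoped ComplexInnerProductSpace Matrix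

namespace LinearMap

open scoped InnerProductSpace

variable {𝕜 E F : Type*} [RCLike 𝕜] [NormedAddCommGroup E] [InnerProductSpace 𝕜 E]
  [NormedAddCommGroup F] [InnerProductSpace 𝕜 F]

theorem IsSymmetricProjection.norm_sq_eq_add {P : E →ₗ[𝕜] E} (hP : P.IsSymmetricProjection)
    (u : E) : ‖u‖ ^ 2 = ‖P u‖ ^ 2 + ‖u - P u‖ ^ 2 := by
  have hPP : P (P u) = P u := congr($hP.isIdempotentElem.eq u)
  have horth : ⟪P u, u - P u⟫_𝕜 = 0 := by
    rw [hP.isSymmetric, map_sub, hPP, sub_self, inner_zero_right]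
  rw [← add_sub_cancel (P u) u, norm_add_sq (𝕜 := 𝕜), horth, map_zero, mul_zero, add_zero,
    add_sub_cancel]

structure IsMoorePenroseInverse (L : E →ₗ[𝕜] F) (L' : F →ₗ[𝕜] E) : Prop where
  comp_comp_eq : L ∘ₗ L' ∘ₗ L = L
  comp_comp_eq' : L' ∘ₗ L ∘ₗ L' = L'
  isSymmetric_comp : (L ∘ₗ L').IsSymmetric
  isSymmetric_comp' : (L' ∘ₗ L).IsSymmetric

namespace IsMoorePenroseInverse

variable {L : E →ₗ[𝕜] F} {L' : F →ₗ[𝕜] E}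

theorem apply_apply_apply (h : IsMoorePenroseInverse L L') (a : E) : L (L' (L a)) = L a :=
  congr($h.comp_comp_eq a)

theorem apply_apply_apply' (h : IsMoorePenroseInverse L L') (b : F) : L' (L (L' b)) = L' b :=
  congr($h.comp_comp_eq' b)

theorem isSymmetricProjection_comp (h : IsMoorePenroseInverse L L') :
    (L ∘ₗ L').IsSymmetricProjection where
  isIdempotentElem := by ext b; exact congr_arg L (h.apply_apply_apply' b)
  isSymmetric := h.isSymmetric_comp

theorem isSymmetricProjection_comp' (h : IsMoorePenroseInverse L L') :
    (L' ∘ₗ L).IsSymmetricProjection where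
  isIdempotentElem := by ext a; exact congr_arg L' (h.apply_apply_apply a)
  isSymmetric := h.isSymmetric_comp'

/-- `L (L' b)` is the orthogonal projection of `b` onto the range of `L`. -/
theorem norm_sub_sq_eq_add (h : IsMoorePenroseInverse L L') (a : E) (b : F) :
    ‖L a - b‖ ^ 2 = ‖L a - L (L' b)‖ ^ 2 + ‖L (L' b) - b‖ ^ 2 := by
  have := h.isSymmetricProjection_comp.norm_sq_eq_add (L a - b)
  simp only [comp_apply, map_sub, h.apply_apply_apply] at this
  rwa [sub_sub_sub_cancel_left] at this

theorem norm_apply_apply_sub_le (h : IsMoorePenroseInverse L L') (a : E) (b : F) :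
    ‖L (L' b) - b‖ ≤ ‖L a - b‖ := by
  have := h.norm_sub_sq_eq_add a b
  nlinarith [norm_nonneg (L (L' b) - b), norm_nonneg (L a - b), sq_nonneg ‖L a - L (L' b)‖]

theorem norm_apply_le_of_norm_sub_le (h : IsMoorePenroseInverse L L') {a : E} {b : F}
    (hab : ‖L a - b‖ ≤ ‖L (L' b) - b‖) :
    ‖L' b‖ ≤ ‖a‖ := by
  have hLa : L a = L (L' b) := by
    have hsplit := h.norm_sub_sq_eq_add a b
    have hzero : ‖L a - L (L' b)‖ = 0 := by
      nlinarith [norm_nonneg (L a - b), norm_nonneg (L a - L (L' b))]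
    rwa [norm_eq_zero, sub_eq_zero] at hzero
  have hproj := h.isSymmetricProjection_comp'.norm_sq_eq_add a
  rw [comp_apply, hLa, h.apply_apply_apply'] at hproj
  nlinarith [norm_nonneg (L' b), norm_nonneg a, sq_nonneg ‖a - L' b‖]

end IsMoorePenroseInverse

end LinearMap

theorem Matrix.isMoorePenroseInverse_toEuclideanLin {𝕜 m n : Type*} [RCLike 𝕜]
    [Fintype m] [DecidableEq m] [Fintype n] [DecidableEq n]
    {A : Matrix m n 𝕜} {B : Matrix n m 𝕜} (h1 : A * B * A = A) (h2 : B * A * B = B)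
    (h3 : (A * B).IsHermitian) (h4 : (B * A).IsHermitian) :
    LinearMap.IsMoorePenroseInverse (toEuclideanLin A) (toEuclideanLin B) where
  comp_comp_eq := by rw [← toLpLin_mul_same, ← toLpLin_mul_same, ← Matrix.mul_assoc, h1]
  comp_comp_eq' := by rw [← toLpLin_mul_same, ← toLpLin_mul_same, ← Matrix.mul_assoc, h2]
  isSymmetric_comp := by rw [← toLpLin_mul_same]; exact isSymmetric_toEuclideanLin_iff.mpr h3
  isSymmetric_comp' := by rw [← toLpLin_mul_same]; exact isSymmetric_toEuclideanLin_iff.mpr h4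

section Frames

open scoped InnerProductSpace

variable (𝕜 : Type*) [RCLike 𝕜] {E : Type*} [NormedAddCommGroup E] [InnerProductSpace 𝕜 E]

def IsFrame (e : ℕ → E) (B₁ B₂ : ℝ) : Prop :=
  ∀ x : E, (Summable fun k => ‖⟪e k, x⟫_𝕜‖ ^ 2) ∧
    B₁ * ‖x‖ ^ 2 ≤ ∑' k, ‖⟪e k, x⟫_𝕜‖ ^ 2 ∧ ∑' k, ‖⟪e k, x⟫_𝕜‖ ^ 2 ≤ B₂ * ‖x‖ ^ 2

def IsTightFrame (e : ℕ → E) (C : ℝ) : Prop :=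
  ∀ x : E, HasSum (fun k => ‖⟪e k, x⟫_𝕜‖ ^ 2) (C * ‖x‖ ^ 2)

variable {𝕜}

/-- `T (e k)` is the canonical dual frame when `T` inverts the frame operator `S`. -/
theorem hasSum_inner_smul_apply_of_comp_eq_one {e : ℕ → E} {S T : E →L[𝕜] E}
    (hS : ∀ x, HasSum (fun k => ⟪e k, x⟫_𝕜 • e k) (S x)) (hTS : T ∘L S = 1) (x : E) :
    HasSum (fun k => ⟪e k, x⟫_𝕜 • T (e k)) x := by
  simpa only [map_smul, ← ContinuousLinearMap.comp_apply, hTS, one_apply_eq_self] using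
    T.hasSum (hS x)

variable {ι : Type*} {E : ι → Type*} [∀ i, NormedAddCommGroup (E i)]
  [∀ i, InnerProductSpace 𝕜 (E i)]

variable (𝕜) in
def frameCoeffs (e : ∀ i, ℕ → E i) (x : PiLp 2 E) (k : ℕ) : EuclideanSpace 𝕜 ι :=
  WithLp.toLp 2 fun i => ⟪e i k, x i⟫_𝕜

variable {e : ∀ i, ℕ → E i}

@[simp]
theorem frameCoeffs_apply (x : PiLp 2 E) (k : ℕ) (i : ι) :
    frameCoeffs 𝕜 e x k i = ⟪e i k, x i⟫_𝕜 :=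
  rfl

theorem frameCoeffs_sub (x y : PiLp 2 E) (k : ℕ) :
    frameCoeffs 𝕜 e (x - y) k = frameCoeffs 𝕜 e x k - frameCoeffs 𝕜 e y k := by
  ext i
  simp [inner_sub_right]

theorem norm_frameCoeffs_sq [Fintype ι] (x : PiLp 2 E) (k : ℕ) :
    ‖frameCoeffs 𝕜 e x k‖ ^ 2 = ∑ i, ‖⟪e i k, x i⟫_𝕜‖ ^ 2 :=
  EuclideanSpace.norm_sq_eq _

theorem hasSum_norm_frameCoeffs_sq [Fintype ι] {C : ℝ} (he : ∀ i, IsTightFrame 𝕜 (e i) C)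
    (x : PiLp 2 E) :
    HasSum (fun k => ‖frameCoeffs 𝕜 e x k‖ ^ 2) (C * ‖x‖ ^ 2) := by
  simp only [norm_frameCoeffs_sq]
  rw [PiLp.norm_sq_eq_of_L2, Finset.mul_sum]
  exact hasSum_sum fun i _ => he i (x i)

variable [Fintype ι] {B₁ B₂ : ℝ}

theorem summable_norm_frameCoeffs_sq (he : ∀ i, IsFrame 𝕜 (e i) B₁ B₂) (x : PiLp 2 E) :
    Summable fun k => ‖frameCoeffs 𝕜 e x k‖ ^ 2 := by
  simp only [norm_frameCoeffs_sq]
  exact summable_sum fun i _ => (he i (x i)).1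

theorem tsum_norm_frameCoeffs_sq (he : ∀ i, IsFrame 𝕜 (e i) B₁ B₂) (x : PiLp 2 E) :
    ∑' k, ‖frameCoeffs 𝕜 e x k‖ ^ 2 = ∑ i, ∑' k, ‖⟪e i k, x i⟫_𝕜‖ ^ 2 := by
  simp only [norm_frameCoeffs_sq]
  exact Summable.tsum_finsetSum fun i _ => (he i (x i)).1

theorem mul_norm_sq_le_tsum_norm_frameCoeffs_sq (he : ∀ i, IsFrame 𝕜 (e i) B₁ B₂)
    (x : PiLp 2 E) : B₁ * ‖x‖ ^ 2 ≤ ∑' k, ‖frameCoeffs 𝕜 e x k‖ ^ 2 := by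
  rw [tsum_norm_frameCoeffs_sq he, PiLp.norm_sq_eq_of_L2, Finset.mul_sum]
  exact Finset.sum_le_sum fun i _ => (he i (x i)).2.1

theorem tsum_norm_frameCoeffs_sq_le_mul_norm_sq (he : ∀ i, IsFrame 𝕜 (e i) B₁ B₂)
    (x : PiLp 2 E) : ∑' k, ‖frameCoeffs 𝕜 e x k‖ ^ 2 ≤ B₂ * ‖x‖ ^ 2 := by
  rw [tsum_norm_frameCoeffs_sq he, PiLp.norm_sq_eq_of_L2, Finset.mul_sum]
  exact Finset.sum_le_sum fun i _ => (he i (x i)).2.2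

theorem norm_le_sqrt_div_mul_norm_of_frameCoeffs_le (hB₁ : 0 < B₁)
    (he : ∀ i, IsFrame 𝕜 (e i) B₁ B₂) {x x' : PiLp 2 E}
    (h : ∀ k, ‖frameCoeffs 𝕜 e x k‖ ≤ ‖frameCoeffs 𝕜 e x' k‖) :
    ‖x‖ ≤ Real.sqrt (B₂ / B₁) * ‖x'‖ := by
  have hcoeffs : ∑' k, ‖frameCoeffs 𝕜 e x k‖ ^ 2 ≤ ∑' k, ‖frameCoeffs 𝕜 e x' k‖ ^ 2 :=
    Summable.tsum_le_tsum (fun k => pow_le_pow_left₀ (norm_nonneg _) (h k) 2)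
      (summable_norm_frameCoeffs_sq he x) (summable_norm_frameCoeffs_sq he x')
  have hsq : ‖x‖ ^ 2 ≤ B₂ / B₁ * ‖x'‖ ^ 2 := by
    rw [div_mul_eq_mul_div, le_div_iff₀ hB₁]
    linarith [mul_norm_sq_le_tsum_norm_frameCoeffs_sq he x,
      tsum_norm_frameCoeffs_sq_le_mul_norm_sq he x']
  calc ‖x‖ = Real.sqrt (‖x‖ ^ 2) := (Real.sqrt_sq (norm_nonneg _)).symm
    _ ≤ Real.sqrt (B₂ / B₁ * ‖x'‖ ^ 2) := Real.sqrt_le_sqrt hsq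
    _ = Real.sqrt (B₂ / B₁) * ‖x'‖ := by
      rw [Real.sqrt_mul' _ (sq_nonneg _), Real.sqrt_sq (norm_nonneg _)]

end Frames

def IsLeastSquaresSolution {X Y : Type*} [SeminormedAddCommGroup Y] (A : X → Y) (y : Y) (x : X) :
    Prop :=
  ∀ w, ‖A x - y‖ ≤ ‖A w - y‖

section LeastSquares

variable {𝕜 : Type*} [RCLike 𝕜] {ι κ : Type*} [Fintype κ]
  {E : ι → Type*} [∀ i, NormedAddCommGroup (E i)] [∀ i, InnerProductSpace 𝕜 (E i)]
  {F : κ → Type*} [∀ j, NormedAddCommGroup (F j)] [∀ j, InnerProductSpace 𝕜 (F j)]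
  {A : PiLp 2 E → PiLp 2 F} {e : ∀ i, ℕ → E i} {f : ∀ j, ℕ → F j} {C : ℝ}
  {L : ℕ → EuclideanSpace 𝕜 ι →ₗ[𝕜] EuclideanSpace 𝕜 κ}
  {L' : ℕ → EuclideanSpace 𝕜 κ →ₗ[𝕜] EuclideanSpace 𝕜 ι}

theorem hasSum_norm_sq_residual (hf : ∀ j, IsTightFrame 𝕜 (f j) C)
    (hA : ∀ w k, frameCoeffs 𝕜 f (A w) k = L k (frameCoeffs 𝕜 e w k))
    (w : PiLp 2 E) (y : PiLp 2 F) :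
    HasSum (fun k => ‖L k (frameCoeffs 𝕜 e w k) - frameCoeffs 𝕜 f y k‖ ^ 2)
      (C * ‖A w - y‖ ^ 2) := by
  simpa only [frameCoeffs_sub, hA] using hasSum_norm_frameCoeffs_sq hf (A w - y)

variable [Fintype ι] {x : PiLp 2 E} {y : PiLp 2 F}

theorem norm_sq_residual_le_of_frameCoeffs_eq (hL : ∀ k, (L k).IsMoorePenroseInverse (L' k))
    (hx : ∀ k, frameCoeffs 𝕜 e x k = L' k (frameCoeffs 𝕜 f y k)) (w : PiLp 2 E) (k : ℕ) :
    ‖L k (frameCoeffs 𝕜 e x k) - frameCoeffs 𝕜 f y k‖ ^ 2 ≤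
      ‖L k (frameCoeffs 𝕜 e w k) - frameCoeffs 𝕜 f y k‖ ^ 2 := by
  rw [hx]
  exact pow_le_pow_left₀ (norm_nonneg _) ((hL k).norm_apply_apply_sub_le _ _) 2

theorem isLeastSquaresSolution_of_frameCoeffs_eq (hC : 0 < C)
    (hf : ∀ j, IsTightFrame 𝕜 (f j) C)
    (hA : ∀ w k, frameCoeffs 𝕜 f (A w) k = L k (frameCoeffs 𝕜 e w k))
    (hL : ∀ k, (L k).IsMoorePenroseInverse (L' k))
    (hx : ∀ k, frameCoeffs 𝕜 e x k = L' k (frameCoeffs 𝕜 f y k)) :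
    IsLeastSquaresSolution A y x := by
  intro w
  have hCsq : C * ‖A x - y‖ ^ 2 ≤ C * ‖A w - y‖ ^ 2 :=
    hasSum_le (norm_sq_residual_le_of_frameCoeffs_eq hL hx w)
      (hasSum_norm_sq_residual hf hA x y) (hasSum_norm_sq_residual hf hA w y)
  exact (pow_le_pow_iff_left₀ (norm_nonneg _) (norm_nonneg _) two_ne_zero).mp
    (le_of_mul_le_mul_left hCsq hC)

theorem norm_frameCoeffs_le_of_isLeastSquaresSolution (hC : 0 ≤ C)
    (hf : ∀ j, IsTightFrame 𝕜 (f j) C)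
    (hA : ∀ w k, frameCoeffs 𝕜 f (A w) k = L k (frameCoeffs 𝕜 e w k))
    (hL : ∀ k, (L k).IsMoorePenroseInverse (L' k))
    (hx : ∀ k, frameCoeffs 𝕜 e x k = L' k (frameCoeffs 𝕜 f y k)) {x' : PiLp 2 E}
    (hx' : IsLeastSquaresSolution A y x') (k : ℕ) :
    ‖frameCoeffs 𝕜 e x k‖ ≤ ‖frameCoeffs 𝕜 e x' k‖ := by
  rw [hx]
  refine (hL k).norm_apply_le_of_norm_sub_le (le_of_not_gt fun hlt => ?_)
  -- a strictly larger `k`-th residual would make the total residual of `x'` exceed that of `x`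
  have hCsq : C * ‖A x - y‖ ^ 2 < C * ‖A x' - y‖ ^ 2 := by
    refine hasSum_lt (norm_sq_residual_le_of_frameCoeffs_eq hL hx x') (i := k) ?_
      (hasSum_norm_sq_residual hf hA x y) (hasSum_norm_sq_residual hf hA x' y)
    rw [hx]
    exact pow_lt_pow_left₀ hlt (norm_nonneg _) two_ne_zero
  have := mul_le_mul_of_nonneg_left (pow_le_pow_left₀ (norm_nonneg _) (hx' x) 2) hC
  linarith

end LeastSquares

theorem frame_least_squares_properties_general
    {M N : ℕ}
    {Xs : Fin M → Type*} [∀ m, NormedAddCommGroup (Xs m)]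
    [∀ m, InnerProductSpace ℂ (Xs m)]
    {Ys : Fin N → Type*} [∀ n, NormedAddCommGroup (Ys n)]
    [∀ n, InnerProductSpace ℂ (Ys n)]
    (A : PiLp 2 Xs →L[ℂ] PiLp 2 Ys)
    (e : ∀ m, ℕ → Xs m) (f : ∀ n, ℕ → Ys n)
    (B1 B2 C : ℝ) (hB1 : 0 < B1) (hC : 0 < C)
    (hframe_e : ∀ (m) (x : Xs m), (Summable fun k => ‖⟪e m k, x⟫‖ ^ 2) ∧
      B1 * ‖x‖ ^ 2 ≤ ∑' k, ‖⟪e m k, x⟫‖ ^ 2 ∧ ∑' k, ‖⟪e m k, x⟫‖ ^ 2 ≤ B2 * ‖x‖ ^ 2)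
    (htight_f : ∀ (n) (y : Ys n), HasSum (fun k => ‖⟪f n k, y⟫‖ ^ 2) (C * ‖y‖ ^ 2))
    (S T : ∀ m, Xs m →L[ℂ] Xs m)
    (hS : ∀ (m) (x : Xs m), HasSum (fun k => ⟪e m k, x⟫ • e m k) (S m x))
    (hTS : ∀ m, T m ∘L S m = 1)
    (Λ : ℕ → Matrix (Fin N) (Fin M) ℂ)
    (hΛ : ∀ (k : ℕ) (x : PiLp 2 Xs) (n : Fin N),
      ⟪f n k, A x n⟫ = ∑ m, Λ k n m * ⟪e m k, x m⟫)
    (Λd : ℕ → Matrix (Fin M) (Fin N) ℂ)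
    (hMP1 : ∀ k, Λ k * Λd k * Λ k = Λ k)
    (hMP2 : ∀ k, Λd k * Λ k * Λd k = Λd k)
    (hMP3 : ∀ k, (Λ k * Λd k)ᴴ = Λ k * Λd k)
    (hMP4 : ∀ k, (Λd k * Λ k)ᴴ = Λd k * Λ k)
    (y : PiLp 2 Ys)
    (hrange : ∀ m, ∃ z : Xs m, ∀ k,
      ⟪e m k, z⟫ = (Λd k).mulVec (fun n => ⟪f n k, y n⟫) m) :
    ∃ x : PiLp 2 Xs,
      (∀ m, HasSum
        (fun k => ((Λd k).mulVec (fun n => ⟪f n k, y n⟫) m) • T m (e m k)) (x m)) ∧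
      -- `x = 𝒜y` is a least-squares solution
      (∀ z : PiLp 2 Xs, ‖A x - y‖ ≤ ‖A z - y‖) ∧
      -- coefficient minimality among least-squares solutions
      (∀ xstar : PiLp 2 Xs, (∀ w : PiLp 2 Xs, ‖A xstar - y‖ ≤ ‖A w - y‖) →
        ∀ k, ∑ m, ‖⟪e m k, x m⟫‖ ^ 2 ≤ ∑ m, ‖⟪e m k, xstar m⟫‖ ^ 2) ∧
      -- norm comparison with the minimum-norm least-squares solution `x†`
      (∀ xdag : PiLp 2 Xs,
        ((∀ w : PiLp 2 Xs, ‖A xdag - y‖ ≤ ‖A w - y‖) ∧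
          (∀ z : PiLp 2 Xs, (∀ w : PiLp 2 Xs, ‖A z - y‖ ≤ ‖A w - y‖) → ‖xdag‖ ≤ ‖z‖)) →
        ‖xdag‖ ≤ ‖x‖ ∧ ‖x‖ ≤ Real.sqrt (B2 / B1) * ‖xdag‖) := by
  choose z hz using hrange
  let x : PiLp 2 Xs := WithLp.toLp 2 z
  have hA (w : PiLp 2 Xs) (k : ℕ) :
      frameCoeffs ℂ f (A w) k = Matrix.toEuclideanLin (Λ k) (frameCoeffs ℂ e w k) := by
    ext n
    simp [hΛ, Matrix.toLpLin_apply, Matrix.mulVec, dotProduct]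
  have hΛd (k : ℕ) : (Matrix.toEuclideanLin (Λ k)).IsMoorePenroseInverse
      (Matrix.toEuclideanLin (Λd k)) :=
    Matrix.isMoorePenroseInverse_toEuclideanLin (hMP1 k) (hMP2 k) (hMP3 k) (hMP4 k)
  have hx (k : ℕ) :
      frameCoeffs ℂ e x k = Matrix.toEuclideanLin (Λd k) (frameCoeffs ℂ f y k) := by
    ext m
    exact hz m k
  have hLS : IsLeastSquaresSolution A y x :=
    isLeastSquaresSolution_of_frameCoeffs_eq hC htight_f hA hΛd hx
  have hcoeffs {x' : PiLp 2 Xs} (hx' : IsLeastSquaresSolution A y x') (k : ℕ) :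
      ‖frameCoeffs ℂ e x k‖ ≤ ‖frameCoeffs ℂ e x' k‖ :=
    norm_frameCoeffs_le_of_isLeastSquaresSolution hC.le htight_f hA hΛd hx hx' k
  refine ⟨x, fun m => ?_, hLS, fun x' hx' k => ?_, fun xd ⟨hxd, hxd_min⟩ => ⟨hxd_min x hLS, ?_⟩⟩
  · simpa only [hz] using hasSum_inner_smul_apply_of_comp_eq_one (hS m) (hTS m) (z m)
  · simpa only [norm_frameCoeffs_sq] using pow_le_pow_left₀ (norm_nonneg _) (hcoeffs hx' k) 2
  · exact norm_le_sqrt_div_mul_norm_of_frameCoeffs_le hB1 hframe_e (hcoeffs hxd)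

/-- If the intertwining assumption holds, `{f n k}` are tight frames (bound `C`) and
the range condition holds, then `𝒜y` is a least-squares solution of `A x = y`; for any
least-squares solution `x*` and every `k` one has
`∑_m |⟪e m k, (𝒜y) m⟫|² ≤ ∑_m |⟪e m k, x* m⟫|²`; and
`‖x†‖ ≤ ‖𝒜y‖ ≤ √(B2/B1) ‖x†‖` where `B1, B2` are the frame bounds of `{e m k}`. -/
theorem frame_least_squares_properties
    {M N : ℕ}
    {Xs : Fin M → Type*} [∀ m, NormedAddCommGroup (Xs m)]
    [∀ m, InnerProductSpace ℂ (Xs m)] [∀ m, CompleteSpace (Xs m)]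
    {Ys : Fin N → Type*} [∀ n, NormedAddCommGroup (Ys n)]
    [∀ n, InnerProductSpace ℂ (Ys n)] [∀ n, CompleteSpace (Ys n)]
    (A : PiLp 2 Xs →L[ℂ] PiLp 2 Ys)
    (e : ∀ m, ℕ → Xs m) (f : ∀ n, ℕ → Ys n)
    (B1 B2 C : ℝ) (hB1 : 0 < B1) (hB2 : 0 < B2) (hC : 0 < C)
    (hframe_e : ∀ (m) (x : Xs m), (Summable fun k => ‖⟪e m k, x⟫‖ ^ 2) ∧
      B1 * ‖x‖ ^ 2 ≤ ∑' k, ‖⟪e m k, x⟫‖ ^ 2 ∧ ∑' k, ‖⟪e m k, x⟫‖ ^ 2 ≤ B2 * ‖x‖ ^ 2)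
    (htight_f : ∀ (n) (y : Ys n), HasSum (fun k => ‖⟪f n k, y⟫‖ ^ 2) (C * ‖y‖ ^ 2))
    (S T : ∀ m, Xs m →L[ℂ] Xs m)
    (hS : ∀ (m) (x : Xs m), HasSum (fun k => ⟪e m k, x⟫ • e m k) (S m x))
    (hST : ∀ m, S m ∘L T m = 1) (hTS : ∀ m, T m ∘L S m = 1)
    (Λ : ℕ → Matrix (Fin N) (Fin M) ℂ)
    (hΛ : ∀ (k : ℕ) (x : PiLp 2 Xs) (n : Fin N),
      ⟪f n k, A x n⟫ = ∑ m, Λ k n m * ⟪e m k, x m⟫)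
    (Λd : ℕ → Matrix (Fin M) (Fin N) ℂ)
    (hMP1 : ∀ k, Λ k * Λd k * Λ k = Λ k)
    (hMP2 : ∀ k, Λd k * Λ k * Λd k = Λd k)
    (hMP3 : ∀ k, (Λ k * Λd k)ᴴ = Λ k * Λd k)
    (hMP4 : ∀ k, (Λd k * Λ k)ᴴ = Λd k * Λ k)
    (y : PiLp 2 Ys)
    (hrange : ∀ m, ∃ z : Xs m, ∀ k,
      ⟪e m k, z⟫ = (Λd k).mulVec (fun n => ⟪f n k, y n⟫) m) :
    ∃ x : PiLp 2 Xs,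
      (∀ m, HasSum
        (fun k => ((Λd k).mulVec (fun n => ⟪f n k, y n⟫) m) • T m (e m k)) (x m)) ∧
      -- `x = 𝒜y` is a least-squares solution
      (∀ z : PiLp 2 Xs, ‖A x - y‖ ≤ ‖A z - y‖) ∧
      -- coefficient minimality among least-squares solutions
      (∀ xstar : PiLp 2 Xs, (∀ w : PiLp 2 Xs, ‖A xstar - y‖ ≤ ‖A w - y‖) →
        ∀ k, ∑ m, ‖⟪e m k, x m⟫‖ ^ 2 ≤ ∑ m, ‖⟪e m k, xstar m⟫‖ ^ 2) ∧
      -- norm comparison with the minimum-norm least-squares solution `x†`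
      (∀ xdag : PiLp 2 Xs,
        ((∀ w : PiLp 2 Xs, ‖A xdag - y‖ ≤ ‖A w - y‖) ∧
          (∀ z : PiLp 2 Xs, (∀ w : PiLp 2 Xs, ‖A z - y‖ ≤ ‖A w - y‖) → ‖xdag‖ ≤ ‖z‖)) →
        ‖xdag‖ ≤ ‖x‖ ∧ ‖x‖ ≤ Real.sqrt (B2 / B1) * ‖xdag‖) :=
  frame_least_squares_properties_general A e f B1 B2 C hB1 hC hframe_e htight_f S T hS hTS Λ hΛ Λd
    hMP1 hMP2 hMP3 hMP4 y hrange
end
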